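/- arXiv:cs/0702032 — 4 statements merged into one kernel-verified Lean document; each statement's English description precedes it below -/
import Mathlib

section
/- Consider the greedy peeling process on a finite weighted graph G: set H_n = G, and for i = n down to 1, let v_i be a vertex of minimum weighted degree r_i in H_i, and let H_{i−1} = H_i − v_i. Then for any real w, if I(w) is the largest index i such that r_i ≥ w, the subgraph H_{I(w)} equals the w-core of G. -/
/-!
Every vertex of the peeling order after `I` is removed with degree `r j < w0`. A set `S` of
minimum degree `≥ w0` that still lies in `H j` cannot contain `v j`, because its degree in `S` is
at most its degree `r j` in `H j`; so by downward induction `S` survives into `H I`. Conversely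
every vertex of `H I` has degree at least the minimum `r I ≥ w0`.
-/

open Finset

variable {V : Type*} [Fintype V] [DecidableEq V]

/-- Weighted degree of vertex `v` in the subgraph induced on `S`. -/
def wDeg (w : V → V → ℝ) (S : Finset V) (v : V) : ℝ := ∑ u ∈ S, w v u

/-- Total edge weight of the subgraph induced on `S`. -/
noncomputable def wTot (w : V → V → ℝ) (S : Finset V) : ℝ :=
  (∑ u ∈ S, ∑ x ∈ S, w u x) / 2

/-- Density of the subgraph induced on `S`. -/
noncomputable def dens (w : V → V → ℝ) (S : Finset V) : ℝ := wTot w S / S.card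

theorem wDeg_mono {α : Type*} {w : α → α → ℝ} (hw : ∀ u x, 0 ≤ w u x) {S T : Finset α}
    (hST : S ⊆ T) (u : α) : wDeg w S u ≤ wDeg w T u :=
  sum_le_sum_of_subset_of_nonneg hST fun x _ _ => hw u x

theorem subset_erase_of_wDeg_lt {α : Type*} [DecidableEq α] {w : α → α → ℝ}
    (hw : ∀ u x, 0 ≤ w u x) {S T : Finset α} {d : ℝ} (hS : ∀ u ∈ S, d ≤ wDeg w S u)
    (hST : S ⊆ T) {x : α} (hx : wDeg w T x < d) : S ⊆ T.erase x := by
  have hxS : x ∉ S := fun hxS => ((hS x hxS).trans (wDeg_mono hw hST x)).not_gt hx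
  exact fun u hu => mem_erase.2 ⟨ne_of_mem_of_not_mem hu hxS, hST hu⟩

theorem stmt3_general (w : V → V → ℝ)
    (hnn : ∀ u v, 0 ≤ w u v)
    (H : ℕ → Finset V) (v : ℕ → V) (r : ℕ → ℝ)
    (hHn : H (Fintype.card V) = Finset.univ)
    (hpeel : ∀ i, 1 ≤ i → i ≤ Fintype.card V →
      v i ∈ H i ∧ r i = wDeg w (H i) (v i) ∧
      (∀ u ∈ H i, r i ≤ wDeg w (H i) u) ∧ H (i - 1) = (H i).erase (v i))
    (w0 : ℝ) (I : ℕ) (hI1 : 1 ≤ I) (hIn : I ≤ Fintype.card V)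
    (hrI : w0 ≤ r I)
    (hImax : ∀ j, I < j → j ≤ Fintype.card V → r j < w0) :
    (∀ u ∈ H I, w0 ≤ wDeg w (H I) u) ∧
    ∀ S : Finset V, (∀ u ∈ S, w0 ≤ wDeg w S u) → S ⊆ H I := by
  obtain ⟨-, -, hmin, -⟩ := hpeel I hI1 hIn
  refine ⟨fun u hu => hrI.trans (hmin u hu), fun S hS => ?_⟩
  refine Nat.decreasingInduction' (P := fun j => S ⊆ H j) (fun k hk hIk hSk => ?_) hIn
    (hHn ▸ subset_univ S)
  obtain ⟨-, hr, -, herase⟩ := hpeel (k + 1) (by omega) hk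
  rw [show k = k + 1 - 1 from rfl, herase]
  exact subset_erase_of_wDeg_lt hnn hS hSk (hr ▸ hImax (k + 1) (by omega) hk)

/-- in the greedy peeling process, if I is the largest index with
r_I ≥ w₀, then H_I is the w₀-core of G: it has minimum weighted degree ≥ w₀ and
contains every induced subgraph of minimum weighted degree ≥ w₀. -/
theorem stmt3 (w : V → V → ℝ) (hsymm : ∀ u v, w u v = w v u)
    (hnn : ∀ u v, 0 ≤ w u v) (hdiag : ∀ v, w v v = 0)
    (H : ℕ → Finset V) (v : ℕ → V) (r : ℕ → ℝ)
    (hHn : H (Fintype.card V) = Finset.univ)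
    (hpeel : ∀ i, 1 ≤ i → i ≤ Fintype.card V →
      v i ∈ H i ∧ r i = wDeg w (H i) (v i) ∧
      (∀ u ∈ H i, r i ≤ wDeg w (H i) u) ∧ H (i - 1) = (H i).erase (v i))
    (w0 : ℝ) (I : ℕ) (hI1 : 1 ≤ I) (hIn : I ≤ Fintype.card V)
    (hrI : w0 ≤ r I)
    (hImax : ∀ j, I < j → j ≤ Fintype.card V → r j < w0) :
    (∀ u ∈ H I, w0 ≤ wDeg w (H I) u) ∧
    ∀ S : Finset V, (∀ u ∈ S, w0 ≤ wDeg w S u) → S ⊆ H I :=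
  stmt3_general w hnn H v r hHn hpeel w0 I hI1 hIn hrI hImax
end

section
/- Let G be a finite weighted graph and let H* be an induced subgraph of G with density d* > 0. Then the (2d*/3)-core of G has total edge weight at least W(H*)/3. -/
open Finset

variable {V : Type*} [Fintype V] [DecidableEq V]

/-!
Peeling: as long as some vertex has weighted degree below `c`, delete it. Each deletion costs
less than `c` of edge weight, so the subgraph reached, whose minimum weighted degree is at least
`c`, keeps weight at least `W(H) - c |H|`. Started from `H*` with `c = 2d*/3`, and since
`W(H*) = d* |H*|`, this leaves at least `W(H*)/3`.
-/

omit [Fintype V] in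
theorem wTot_erase {w : V → V → ℝ} (hsymm : ∀ u v, w u v = w v u) (hdiag : ∀ v, w v v = 0)
    {S : Finset V} {v : V} (hv : v ∈ S) :
    wTot w (S.erase v) = wTot w S - wDeg w S v := by
  have hdeg : wDeg w S v = ∑ u ∈ S.erase v, w u v := by
    rw [wDeg, ← add_sum_erase S _ hv, hdiag, zero_add]
    exact sum_congr rfl fun u _ => hsymm v u
  have hsplit : ∑ u ∈ S, ∑ x ∈ S, w u x
      = wDeg w S v + ∑ u ∈ S.erase v, (w u v + ∑ x ∈ S.erase v, w u x) := by
    rw [← add_sum_erase S _ hv, wDeg]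
    exact congrArg _ (sum_congr rfl fun u _ => (add_sum_erase S _ hv).symm)
  rw [wTot, wTot, hsplit, sum_add_distrib, ← hdeg]
  ring

omit [Fintype V] in
theorem exists_le_wDeg_and_wTot_sub_mul_card_le {w : V → V → ℝ}
    (hsymm : ∀ u v, w u v = w v u) (hdiag : ∀ v, w v v = 0) {c : ℝ} (hc : 0 ≤ c)
    (S : Finset V) :
    ∃ T : Finset V, (∀ u ∈ T, c ≤ wDeg w T u) ∧ wTot w S - c * #S ≤ wTot w T := by
  induction S using Finset.strongInduction with
  | _ S ih =>
    by_cases hmin : ∀ u ∈ S, c ≤ wDeg w S u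
    · exact ⟨S, hmin, sub_le_self _ (by positivity)⟩
    · push Not at hmin
      obtain ⟨v, hv, hlow⟩ := hmin
      obtain ⟨T, hT, hW⟩ := ih (S.erase v) (erase_ssubset hv)
      refine ⟨T, hT, ?_⟩
      rw [wTot_erase hsymm hdiag hv, cast_card_erase_of_mem hv] at hW
      linarith

omit [Fintype V] [DecidableEq V] in
theorem wTot_eq_dens_mul_card (w : V → V → ℝ) (S : Finset V) :
    wTot w S = dens w S * #S := by
  rcases S.eq_empty_or_nonempty with rfl | hS
  · simp [wTot]
  · rw [_root_.dens, div_mul_cancel₀ _ (by exact_mod_cast hS.card_ne_zero)]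

theorem stmt5_general (w : V → V → ℝ) (hsymm : ∀ u v, w u v = w v u)
    (hdiag : ∀ v, w v v = 0)
    (Hstar : Finset V) (dstar : ℝ) (hd : dens w Hstar = dstar) (hdpos : 0 < dstar) :
    ∃ S : Finset V,
      (∀ u ∈ S, 2 * dstar / 3 ≤ wDeg w S u) ∧
      wTot w Hstar / 3 ≤ wTot w S := by
  obtain ⟨S, hS, hW⟩ :=
    exists_le_wDeg_and_wTot_sub_mul_card_le hsymm hdiag (by positivity : 0 ≤ 2 * dstar / 3) Hstar
  refine ⟨S, hS, ?_⟩
  have hHstar := wTot_eq_dens_mul_card w Hstar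
  rw [hd] at hHstar
  linarith

/-- if H* is an induced subgraph of density d* > 0, then the
(2d*/3)-core of G has total edge weight at least W(H*)/3. -/
theorem stmt5 (w : V → V → ℝ) (hsymm : ∀ u v, w u v = w v u)
    (hnn : ∀ u v, 0 ≤ w u v) (hdiag : ∀ v, w v v = 0)
    (Hstar : Finset V) (dstar : ℝ) (hd : dens w Hstar = dstar) (hdpos : 0 < dstar) :
    ∃ S : Finset V,
      (∀ u ∈ S, 2 * dstar / 3 ≤ wDeg w S u) ∧
      wTot w Hstar / 3 ≤ wTot w S :=
  stmt5_general w hsymm hdiag Hstar dstar hd hdpos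
end

section
/- Let G be a finite weighted graph and k ≥ 1. Suppose H is an induced subgraph maximizing |H|(d(H) − α) over all induced subgraphs, where α = dal(G,k)/2. Then d(H) ≥ dal(G,k)/2, and moreover |H| ≥ |H*|·dal(G,k)/(2 d(H)) for any subgraph H* with |H*| ≥ k achieving density dal(G,k). -/
open Finset

variable {V : Type*} [Fintype V] [DecidableEq V]

/-! Comparing the maximiser `H` of `|S| (d(S) - α)` with a set `S` of density above `α`:
the objective is positive at `S`, hence at `H`, so `d(H) > α`; dropping the term `-|H| α`
then bounds `|S| (d(S) - α)` by the weight `|H| d(H)` of `H`. -/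

section Maximizer

omit [Fintype V] [DecidableEq V]

variable (w : V → V → ℝ)

theorem dens_empty : dens w ∅ = 0 := by
  simp [_root_.dens]

theorem nonempty_of_dens_ne_zero {S : Finset V} (h : dens w S ≠ 0) : S.Nonempty :=
  nonempty_iff_ne_empty.2 fun hS => h (hS ▸ dens_empty w)

variable {w} {α : ℝ} {H : Finset V}

theorem lt_dens_of_maximizer
    (hmax : ∀ S : Finset V, (S.card : ℝ) * (dens w S - α) ≤ (H.card : ℝ) * (dens w H - α))
    {S : Finset V} (hS : S.Nonempty) (hαS : α < dens w S) : α < dens w H := by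
  have hobjS : 0 < (S.card : ℝ) * (dens w S - α) :=
    mul_pos (by exact_mod_cast hS.card_pos) (sub_pos.2 hαS)
  have hobjH := hobjS.trans_le (hmax S)
  exact sub_pos.1 (pos_of_mul_pos_right hobjH (Nat.cast_nonneg _))

theorem card_mul_sub_le_card_mul_dens_of_maximizer
    (hmax : ∀ S : Finset V, (S.card : ℝ) * (dens w S - α) ≤ (H.card : ℝ) * (dens w H - α))
    (hα : 0 ≤ α) (S : Finset V) : (S.card : ℝ) * (dens w S - α) ≤ (H.card : ℝ) * dens w H := by
  have : 0 ≤ (H.card : ℝ) * α := mul_nonneg (Nat.cast_nonneg _) hα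
  linarith [hmax S]

end Maximizer

theorem stmt9_general (w : V → V → ℝ) (dal : ℝ) (hdal : 0 < dal)
    (Hstar : Finset V) (hstar_dens : dens w Hstar = dal)
    (H : Finset V)
    (hmax : ∀ S : Finset V,
      (S.card : ℝ) * (dens w S - dal / 2) ≤ (H.card : ℝ) * (dens w H - dal / 2)) :
    dal / 2 ≤ dens w H ∧
    (Hstar.card : ℝ) * dal / (2 * dens w H) ≤ (H.card : ℝ) := by
  have hstar_ne : Hstar.Nonempty := nonempty_of_dens_ne_zero w (hstar_dens ▸ hdal.ne')
  have hlt : dal / 2 < dens w H :=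
    lt_dens_of_maximizer hmax hstar_ne (by rw [hstar_dens]; linarith)
  refine ⟨hlt.le, ?_⟩
  have hweight := card_mul_sub_le_card_mul_dens_of_maximizer hmax (by positivity) Hstar
  rw [hstar_dens] at hweight
  rw [div_le_iff₀ (by linarith)]
  linarith

/-- if H maximizes |H|(d(H) − α) with α = dal(G,k)/2, then
d(H) ≥ dal(G,k)/2 and |H| ≥ |H*|·dal(G,k)/(2 d(H)). -/
theorem stmt9 (w : V → V → ℝ) (hsymm : ∀ u v, w u v = w v u)
    (hnn : ∀ u v, 0 ≤ w u v) (hdiag : ∀ v, w v v = 0)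
    (k : ℕ) (hk : 1 ≤ k) (dal : ℝ) (hdal : 0 < dal)
    (Hstar : Finset V) (hstar_card : k ≤ Hstar.card) (hstar_dens : dens w Hstar = dal)
    (hopt : ∀ S : Finset V, k ≤ S.card → dens w S ≤ dal)
    (H : Finset V) (hHne : H.Nonempty)
    (hmax : ∀ S : Finset V,
      (S.card : ℝ) * (dens w S - dal / 2) ≤ (H.card : ℝ) * (dens w H - dal / 2)) :
    dal / 2 ≤ dens w H ∧
    (Hstar.card : ℝ) * dal / (2 * dens w H) ≤ (H.card : ℝ) :=
  stmt9_general w dal hdal Hstar hstar_dens H hmax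
end

section
/- Let G be a finite weighted graph, k ≥ 1, and let H be a nonempty induced subgraph with d(H) ≥ dal(G,k)/2 and |H| ≥ |H*|·dal(G,k)/(2 d(H)), where H* is a densest subgraph on at least k vertices. If |H| < k and H′ is any induced subgraph of size exactly k containing H, then d(H′) ≥ dal(G,k)/2. Consequently there exists an induced subgraph on at least k vertices with density at least dal(G,k)/2. -/
open Finset

variable {V : Type*} [Fintype V] [DecidableEq V]

/-- padding a dense small set H to size exactly k preserves
density ≥ dal(G,k)/2; consequently some subgraph on ≥ k vertices has density
at least dal(G,k)/2. -/
theorem stmt10 (w : V → V → ℝ) (hsymm : ∀ u v, w u v = w v u)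
    (hnn : ∀ u v, 0 ≤ w u v) (hdiag : ∀ v, w v v = 0)
    (k : ℕ) (hk : 1 ≤ k) (hkn : k ≤ Fintype.card V)
    (dal : ℝ) (hdal : 0 < dal)
    (Hstar : Finset V) (hstar_card : k ≤ Hstar.card) (hstar_dens : dens w Hstar = dal)
    (hopt : ∀ S : Finset V, k ≤ S.card → dens w S ≤ dal)
    (H : Finset V) (hHne : H.Nonempty)
    (hHd : dal / 2 ≤ dens w H)
    (hHsize : (Hstar.card : ℝ) * dal / (2 * dens w H) ≤ (H.card : ℝ)) :
    (H.card < k → ∀ H' : Finset V, H ⊆ H' → H'.card = k → dal / 2 ≤ dens w H') ∧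
    ∃ H'' : Finset V, k ≤ H''.card ∧ dal / 2 ≤ dens w H'' := by
  have hdH : 0 < dens w H := lt_of_lt_of_le (by linarith) hHd
  have hcardH : 0 < (H.card : ℝ) := by exact_mod_cast hHne.card_pos
  have hwHeq : wTot w H = dens w H * H.card := by
    rw [_root_.dens, div_mul_cancel₀ _ hcardH.ne']
  have hk' : (k : ℝ) ≤ (Hstar.card : ℝ) := by exact_mod_cast hstar_card
  have hwH : (k : ℝ) * dal / 2 ≤ wTot w H := by
    rw [div_le_iff₀ (by positivity)] at hHsize
    nlinarith
  have hmono : ∀ H' : Finset V, H ⊆ H' → wTot w H ≤ wTot w H' := by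
    intro H' hsub
    unfold wTot
    have h1 : ∑ u ∈ H, ∑ x ∈ H, w u x ≤ ∑ u ∈ H, ∑ x ∈ H', w u x :=
      Finset.sum_le_sum fun u _ =>
        Finset.sum_le_sum_of_subset_of_nonneg hsub fun x _ _ => hnn u x
    have h2 : ∑ u ∈ H, ∑ x ∈ H', w u x ≤ ∑ u ∈ H', ∑ x ∈ H', w u x :=
      Finset.sum_le_sum_of_subset_of_nonneg hsub fun u _ _ =>
        Finset.sum_nonneg fun x _ => hnn u x
    linarith
  have key : ∀ H' : Finset V, H ⊆ H' → H'.card = k → dal / 2 ≤ dens w H' := by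
    intro H' hsub hcard
    have hkpos : 0 < (k : ℝ) := by exact_mod_cast hk
    have := le_trans hwH (hmono H' hsub)
    unfold _root_.dens
    rw [hcard, le_div_iff₀ hkpos]
    linarith
  refine ⟨fun _ => key, ?_⟩
  by_cases hc : k ≤ H.card
  · exact ⟨H, hc, hHd⟩
  · obtain ⟨H', hsub, hcard⟩ := Finset.exists_superset_card_eq (le_of_lt (not_le.mp hc)) hkn
    exact ⟨H', hcard.ge, key H' hsub hcard⟩
end
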